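/- Let n ≥ 1, N = 2^n, m ≥ 1, and let (Q^{(i)}_z)_{i∈[m], z∈Fin N} be i.i.d. random variables each exponentially distributed with rate 1. Define P^{(i)}(z) = Q^{(i)}_z / ∑_{w} Q^{(i)}_w for each i. Then E[(1/m) ∑_{i∈[m]} max_{z} P^{(i)}(z)] ≤ (2/N)(n·ln 2 + 3). Equivalently, E[(1/m) max_{z⃗∈(Fin N)^m} ∑_{i∈[m]} P^{(i)}(z^{(i)})] ≤ (2/N)(n·ln 2 + 3). -/

import Mathlib

/-!
Fix a row, write `S = ∑_z Q_z`, `a = log N` and `T = N / 2`. Pointwise,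
`max_z Q_z / S ≤ (a + ∑_z (Q_z - a)⁺) / T + 1{S ≤ T}`: if `S > T` use `Q_z ≤ a + (Q_z - a)⁺`,
otherwise the left side is at most `1`. For `Exp(1)` variables `E (Q - a)⁺ = e^{-a} = 1 / N`, and the
Chernoff bound with `E e^{-Q} = 1 / 2` gives `P(S ≤ N / 2) ≤ e^{N/2} 2^{-N} ≤ 4 / N`, so each row
contributes at most `2 (log N + 1) / N + 4 / N`. The maximum over `z⃗` of the sum splits into the sum
of the row maxima, so both quantities are averages of these row bounds.
-/

open MeasureTheory ProbabilityTheory Real Set Filter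

instance isProbabilityMeasure_expMeasure_one : IsProbabilityMeasure (expMeasure 1) :=
  isProbabilityMeasure_expMeasure one_pos

theorem expMeasure_one_eq_withDensity :
    expMeasure 1 = (volume.restrict (Ioi 0)).withDensity fun x => ENNReal.ofReal (rexp (-x)) := by
  have hpdf : gammaPDF 1 1 = (Ici 0).indicator fun x => ENNReal.ofReal (rexp (-x)) := by
    ext x
    by_cases hx : 0 ≤ x <;> simp [gammaPDF, gammaPDFReal, hx]
  rw [expMeasure, gammaMeasure, hpdf, withDensity_indicator measurableSet_Ici,
    Measure.restrict_congr_set Ioi_ae_eq_Ici]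

theorem integral_expMeasure_one (f : ℝ → ℝ) :
    ∫ x, f x ∂expMeasure 1 = ∫ x in Ioi 0, rexp (-x) * f x := by
  rw [expMeasure_one_eq_withDensity, integral_withDensity_eq_integral_toReal_smul
    (by fun_prop) (ae_of_all _ fun _ => ENNReal.ofReal_lt_top)]
  simp [ENNReal.toReal_ofReal (exp_nonneg _)]

theorem integrable_expMeasure_one_iff {f : ℝ → ℝ} :
    Integrable f (expMeasure 1) ↔ IntegrableOn (fun x => rexp (-x) * f x) (Ioi 0) := by
  rw [expMeasure_one_eq_withDensity, integrable_withDensity_iff_integrable_smul'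
    (by fun_prop) (ae_of_all _ fun _ => ENNReal.ofReal_lt_top)]
  simp [ENNReal.toReal_ofReal (exp_nonneg _), IntegrableOn]

theorem ae_pos_expMeasure_one : ∀ᵐ x ∂expMeasure 1, 0 < x := by
  rw [expMeasure_one_eq_withDensity]
  exact (withDensity_absolutelyContinuous _ _).ae_le (ae_restrict_mem measurableSet_Ioi)

theorem integrable_id_expMeasure_one : Integrable id (expMeasure 1) := by
  rw [integrable_expMeasure_one_iff]
  refine (GammaIntegral_convergent two_pos).congr_fun (fun x _ => ?_) measurableSet_Ioi
  norm_num

theorem integral_expMeasure_one_max_sub {a : ℝ} (ha : 0 ≤ a) :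
    ∫ x, max (x - a) 0 ∂expMeasure 1 = rexp (-a) := by
  rw [integral_expMeasure_one]
  calc ∫ x in Ioi 0, rexp (-x) * max (x - a) 0
      = ∫ x in Ioi a, rexp (-x) * (x - a) := by
        rw [setIntegral_eq_of_subset_of_forall_sdiff_eq_zero measurableSet_Ioi
          (Ioi_subset_Ioi ha) fun x hx => by simp [show x ≤ a from not_lt.1 hx.2]]
        exact setIntegral_congr_fun measurableSet_Ioi fun x hx => by
          simp [(mem_Ioi.1 hx).le]
    _ = ∫ y in Ioi 0, rexp (-(y + a)) * y := by
        rw [← integral_indicator measurableSet_Ioi, ← integral_indicator measurableSet_Ioi,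
          ← integral_add_right_eq_self _ a]
        congr 1 with y
        simp [indicator_apply]
    _ = rexp (-a) * Gamma 2 := by
        rw [Gamma_eq_integral two_pos, ← integral_const_mul]
        refine setIntegral_congr_fun measurableSet_Ioi fun y _ => ?_
        norm_num [neg_add, exp_add]
        ring
    _ = rexp (-a) := by rw [Gamma_two, mul_one]

theorem mgf_id_expMeasure_one {t : ℝ} (ht : t < 1) : mgf id (expMeasure 1) t = (1 - t)⁻¹ := by
  have hexp : ∀ x, rexp (-x) * rexp (t * x) = rexp ((t - 1) * x) := fun x => by
    rw [← exp_add]; ring_nf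
  simp only [mgf, id_eq, integral_expMeasure_one, hexp, integral_exp_mul_Ioi (sub_neg.2 ht)]
  rw [mul_zero, exp_zero, neg_div, ← div_neg, neg_sub, one_div]

theorem integrable_exp_mul_expMeasure_one {t : ℝ} (ht : t < 1) :
    Integrable (fun x => rexp (t * x)) (expMeasure 1) := by
  rw [integrable_expMeasure_one_iff]
  refine (integrableOn_exp_mul_Ioi (sub_neg.2 ht) 0).congr_fun (fun x _ => ?_) measurableSet_Ioi
  rw [← exp_add]; ring_nf

theorem ciSup_div_sum_le {ι : Type*} [Fintype ι] [Nonempty ι] {q : ι → ℝ} (hq : ∀ i, 0 ≤ q i)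
    (a : ℝ) {T : ℝ} (hT : 0 < T) :
    ⨆ i, q i / ∑ j, q j ≤ (a + ∑ j, max (q j - a) 0) / T + if ∑ j, q j ≤ T then 1 else 0 := by
  refine ciSup_le fun i => ?_
  have hqi : q i ≤ ∑ j, q j := Finset.single_le_sum (fun j _ => hq j) (Finset.mem_univ i)
  have hqi_le : q i ≤ a + ∑ j, max (q j - a) 0 := by
    have := Finset.single_le_sum (f := fun j => max (q j - a) 0) (fun j _ => le_max_right _ _)
      (Finset.mem_univ i)
    linarith [le_max_left (q i - a) 0]
  split_ifs with hS
  · have h1 : q i / ∑ j, q j ≤ 1 := div_le_one_of_le₀ hqi ((hq i).trans hqi)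
    have h2 : 0 ≤ (a + ∑ j, max (q j - a) 0) / T := div_nonneg ((hq i).trans hqi_le) hT.le
    linarith
  · calc q i / ∑ j, q j ≤ q i / T := div_le_div_of_nonneg_left (hq i) hT (not_le.1 hS).le
      _ ≤ (a + ∑ j, max (q j - a) 0) / T + 0 := by
        rw [add_zero]; exact div_le_div_of_nonneg_right hqi_le hT.le

theorem ciSup_div_sum_mem_Icc {ι : Type*} [Fintype ι] [Nonempty ι] {q : ι → ℝ}
    (hq : ∀ i, 0 ≤ q i) : ⨆ i, q i / ∑ j, q j ∈ Icc 0 1 := by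
  have hqi : ∀ i, q i ≤ ∑ j, q j := fun i =>
    Finset.single_le_sum (fun j _ => hq j) (Finset.mem_univ i)
  refine ⟨?_, ciSup_le fun i => div_le_one_of_le₀ (hqi i) ((hq i).trans (hqi i))⟩
  obtain ⟨i⟩ := ‹Nonempty ι›
  exact (div_nonneg (hq i) ((hq i).trans (hqi i))).trans
    (le_ciSup (f := fun i => q i / ∑ j, q j) (Finite.bddAbove_range _) i)

theorem exp_half_div_two_pow_le {N : ℕ} (hN : 0 < N) : rexp (N / 2) / 2 ^ N ≤ 4 / N := by
  have hNR : (0 : ℝ) < N := Nat.cast_pos.2 hN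
  have hlog2 : 5 / 8 < log 2 := by have := log_two_gt_d9; norm_num at this ⊢; linarith
  set t := (log 2 - 1 / 2) * N with ht
  have ht0 : 0 ≤ t := mul_nonneg (by linarith) hNR.le
  -- `e^t ≥ 1 + t + t²/2 ≥ 2t`, and `8t ≥ N` because `log 2 - 1/2 ≥ 1/8`
  have h2t : 2 * t ≤ rexp t := by nlinarith [quadratic_le_exp_of_nonneg ht0, sq_nonneg (t - 1)]
  have hpow : rexp (N / 2) / 2 ^ N = (rexp t)⁻¹ := by
    have h2N : (2 : ℝ) ^ N = rexp (N * log 2) := by rw [exp_nat_mul, exp_log two_pos]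
    rw [h2N, ← exp_sub, ← exp_neg, ht]
    ring_nf
  rw [hpow, inv_le_comm₀ (exp_pos t) (by positivity), inv_div, div_le_iff₀ (by norm_num)]
  nlinarith

theorem ciSup_pi_sum_eq_sum_ciSup {ι κ : Type*} [Fintype ι] [Finite κ] [Nonempty κ]
    (f : ι → κ → ℝ) : ⨆ v : ι → κ, ∑ i, f i (v i) = ∑ i, ⨆ k, f i k := by
  choose v hv using fun i => Finite.exists_max (f i)
  have hsup : ∀ i, ⨆ k, f i k = f i (v i) := fun i =>
    ciSup_eq_of_forall_le_of_forall_lt_exists_gt (hv i) fun _ hw => ⟨v i, hw⟩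
  simp only [hsup]
  exact ciSup_eq_of_forall_le_of_forall_lt_exists_gt
    (fun w => Finset.sum_le_sum fun i _ => hv i (w i)) fun _ hw => ⟨v, hw⟩

section ExponentialRandomVariables

variable {Ω : Type*} [MeasurableSpace Ω] {μ : Measure Ω}

theorem ae_nonneg_of_map_eq_expMeasure_one {X : Ω → ℝ} (hX : Measurable X)
    (hlaw : μ.map X = expMeasure 1) : ∀ᵐ ω ∂μ, 0 ≤ X ω :=
  (ae_map_iff hX.aemeasurable measurableSet_Ici).1 <|
    (hlaw ▸ ae_pos_expMeasure_one).mono fun _ h => h.le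

theorem integrable_max_sub_of_map_eq_expMeasure_one {X : Ω → ℝ} (hX : Measurable X)
    (hlaw : μ.map X = expMeasure 1) (a : ℝ) : Integrable (fun ω => max (X ω - a) 0) μ :=
  (hlaw.symm ▸ (integrable_id_expMeasure_one.sub (integrable_const a)).mono (by fun_prop)
    (ae_of_all _ fun x => by simp [abs_of_nonneg, le_abs_self]) :
    Integrable (fun x => max (x - a) 0) (μ.map X)).comp_measurable hX

theorem integral_max_sub_of_map_eq_expMeasure_one {X : Ω → ℝ} (hX : Measurable X)
    (hlaw : μ.map X = expMeasure 1) {a : ℝ} (ha : 0 ≤ a) :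
    ∫ ω, max (X ω - a) 0 ∂μ = rexp (-a) := by
  rw [← integral_map (f := fun x => max (x - a) 0) hX.aemeasurable (by fun_prop), hlaw,
    integral_expMeasure_one_max_sub ha]

variable [IsProbabilityMeasure μ] {ι : Type*} {X : ι → Ω → ℝ}

theorem measureReal_sum_le_le_exp_div_two_pow (hmeas : ∀ i, Measurable (X i))
    (hindep : iIndepFun X μ) (hlaw : ∀ i, μ.map (X i) = expMeasure 1) (s : Finset ι) (T : ℝ) :
    μ.real {ω | ∑ i ∈ s, X i ω ≤ T} ≤ rexp T / 2 ^ s.card := by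
  have hint : ∀ i ∈ s, Integrable (fun ω => rexp (-1 * X i ω)) μ := fun i _ =>
    ((hlaw i).symm ▸ integrable_exp_mul_expMeasure_one (by norm_num)).comp_measurable (hmeas i)
  have hmgf : ∀ i, mgf (X i) μ (-1) = 2⁻¹ := fun i => by
    rw [← mgf_id_map (hmeas i).aemeasurable, hlaw i, mgf_id_expMeasure_one (by norm_num)]
    norm_num
  calc μ.real {ω | ∑ i ∈ s, X i ω ≤ T} = μ.real {ω | (∑ i ∈ s, X i) ω ≤ T} := by
        simp only [Finset.sum_apply]
    _ ≤ rexp (-(-1) * T) * mgf (∑ i ∈ s, X i) μ (-1) :=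
        measure_le_le_exp_mul_mgf T (by norm_num) (hindep.integrable_exp_mul_sum hmeas hint)
    _ = rexp T / 2 ^ s.card := by
        rw [hindep.mgf_sum hmeas, Finset.prod_congr rfl fun i _ => hmgf i, Finset.prod_const,
          neg_neg, one_mul, inv_pow, div_eq_mul_inv]

variable [Fintype ι] [Nonempty ι]

theorem integrable_ciSup_div_sum (hmeas : ∀ i, Measurable (X i))
    (hX : ∀ᵐ ω ∂μ, ∀ i, 0 ≤ X i ω) : Integrable (fun ω => ⨆ i, X i ω / ∑ j, X j ω) μ := by
  refine Integrable.of_bound (Measurable.iSup fun i => by fun_prop).aestronglyMeasurable 1 ?_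
  filter_upwards [hX] with ω hω
  obtain ⟨h0, h1⟩ := ciSup_div_sum_mem_Icc hω
  rwa [Real.norm_of_nonneg h0]

theorem integral_ciSup_div_sum_le (hmeas : ∀ i, Measurable (X i)) (hindep : iIndepFun X μ)
    (hlaw : ∀ i, μ.map (X i) = expMeasure 1) :
    ∫ ω, ⨆ i, X i ω / ∑ j, X j ω ∂μ ≤ 2 / Fintype.card ι * (log (Fintype.card ι) + 3) := by
  set N := Fintype.card ι
  have hNR : (0 : ℝ) < N := Nat.cast_pos.2 Fintype.card_pos
  set a := log N
  set T : ℝ := N / 2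
  have hX : ∀ᵐ ω ∂μ, ∀ i, 0 ≤ X i ω :=
    ae_all_iff.2 fun i => ae_nonneg_of_map_eq_expMeasure_one (hmeas i) (hlaw i)
  have hint_max (i : ι) := integrable_max_sub_of_map_eq_expMeasure_one (hmeas i) (hlaw i) a
  have hE_max (i : ι) : ∫ ω, max (X i ω - a) 0 ∂μ = (N : ℝ)⁻¹ := by
    rw [integral_max_sub_of_map_eq_expMeasure_one (hmeas i) (hlaw i) (log_natCast_nonneg N),
      exp_neg, exp_log hNR]
  have hS : MeasurableSet {ω | ∑ j, X j ω ≤ T} := measurableSet_le (by fun_prop) measurable_const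
  have hint_sum : Integrable (fun ω => a + ∑ j, max (X j ω - a) 0) μ :=
    (integrable_const a).add (integrable_finsetSum _ fun j _ => hint_max j)
  have hint_ind : Integrable ({ω | ∑ j, X j ω ≤ T}.indicator (1 : Ω → ℝ)) μ :=
    (integrable_const 1).indicator hS
  calc ∫ ω, ⨆ i, X i ω / ∑ j, X j ω ∂μ
      ≤ ∫ ω, ((a + ∑ j, max (X j ω - a) 0) / T + {ω | ∑ j, X j ω ≤ T}.indicator 1 ω) ∂μ := by
        refine integral_mono_ae (integrable_ciSup_div_sum hmeas hX)
          ((hint_sum.div_const T).add hint_ind) ?_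
        filter_upwards [hX] with ω hω
        simpa [indicator_apply] using ciSup_div_sum_le hω a (by positivity)
    _ = (a + 1) / T + μ.real {ω | ∑ j, X j ω ≤ T} := by
        rw [integral_add (hint_sum.div_const T) hint_ind, integral_div,
          integral_add (integrable_const a) (integrable_finsetSum _ fun j _ => hint_max j),
          integral_finsetSum _ fun j _ => hint_max j, integral_indicator_one hS]
        simp only [hE_max, Finset.sum_const, Finset.card_univ, nsmul_eq_mul, integral_const,
          probReal_univ, smul_eq_mul, one_mul]
        congr 3
        exact mul_inv_cancel₀ hNR.ne'
    _ ≤ (a + 1) / T + rexp T / 2 ^ N := by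
        gcongr
        simpa using measureReal_sum_le_le_exp_div_two_pow hmeas hindep hlaw Finset.univ T
    _ ≤ 2 / N * (a + 1) + 4 / N := by
        rw [show (a + 1) / T = 2 / N * (a + 1) by simp only [T]; field_simp]
        exact add_le_add_right (exp_half_div_two_pow_le (Fintype.card_pos (α := ι))) _
    _ = 2 / N * (a + 3) := by ring

end ExponentialRandomVariables

theorem stmt1_general {Ω : Type*} [MeasurableSpace Ω] (μ : Measure Ω) [IsProbabilityMeasure μ]
    (n m : ℕ) (N : ℕ) (hN : N = 2 ^ n)
    (Q : Fin m × Fin N → Ω → ℝ)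
    (hmeas : ∀ p, Measurable (Q p))
    (hindep : iIndepFun Q μ)
    (hlaw : ∀ p, Measure.map (Q p) μ = expMeasure 1)
    (P : Fin m → Fin N → Ω → ℝ)
    (hP : ∀ i z ω, P i z ω = Q (i, z) ω / ∑ w : Fin N, Q (i, w) ω) :
    (∫ ω, (1 / (m : ℝ)) * ∑ i : Fin m, ⨆ z : Fin N, P i z ω ∂μ)
      ≤ (2 / N) * (n * Real.log 2 + 3)
    ∧ (∫ ω, (1 / (m : ℝ)) * ⨆ zvec : Fin m → Fin N, ∑ i : Fin m, P i (zvec i) ω ∂μ)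
      ≤ (2 / N) * (n * Real.log 2 + 3) := by
  have : Nonempty (Fin N) := ⟨⟨0, hN ▸ Nat.two_pow_pos n⟩⟩
  set B : ℝ := 2 / N * (n * log 2 + 3)
  have hB : 0 ≤ B := by positivity
  have hlogN : log N = n * log 2 := by rw [hN, Nat.cast_pow, Nat.cast_ofNat, log_pow]
  have hmax : ∀ ω, ⨆ zvec : Fin m → Fin N, ∑ i, P i (zvec i) ω = ∑ i, ⨆ z, P i z ω :=
    fun ω => ciSup_pi_sum_eq_sum_ciSup fun i z => P i z ω
  simp_rw [hmax, and_self]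
  simp only [hP]
  have hrow : ∀ i, ∫ ω, ⨆ z, Q (i, z) ω / ∑ w, Q (i, w) ω ∂μ ≤ B := fun i => by
    simpa [hlogN] using integral_ciSup_div_sum_le (fun z => hmeas (i, z))
      (hindep.precomp (Prod.mk_right_injective i)) (fun z => hlaw (i, z))
  have hint : ∀ i, Integrable (fun ω => ⨆ z, Q (i, z) ω / ∑ w, Q (i, w) ω) μ := fun i =>
    integrable_ciSup_div_sum (fun z => hmeas (i, z)) (ae_all_iff.2 fun z =>
      ae_nonneg_of_map_eq_expMeasure_one (hmeas (i, z)) (hlaw (i, z)))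
  calc ∫ ω, 1 / (m : ℝ) * ∑ i, ⨆ z, Q (i, z) ω / ∑ w, Q (i, w) ω ∂μ
        = 1 / m * ∑ i, ∫ ω, ⨆ z, Q (i, z) ω / ∑ w, Q (i, w) ω ∂μ := by
          rw [integral_const_mul, integral_finsetSum _ fun i _ => hint i]
      _ ≤ 1 / m * (m * B) := by
          gcongr
          simpa using Finset.sum_le_card_nsmul Finset.univ _ B fun i _ => hrow i
      _ = m / m * B := by ring
      _ ≤ B := mul_le_of_le_one_left hB (div_self_le_one _)

/-- Let `N = 2^n`, and let `(Q i z)` for `i ∈ Fin m`, `z ∈ Fin N` be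
i.i.d. `Exp(1)` random variables. With `P i z = Q i z / ∑ w, Q i w` (so that each
`P i` is a flat Dirichlet `Dir(1^N)` random distribution), both
`E[(1/m) ∑ i, max_z P i z]` and `E[(1/m) max_{z⃗} ∑ i, P i (z⃗ i)]` are at most
`(2/N)(n ln 2 + 3)`. -/
theorem stmt1 {Ω : Type*} [MeasurableSpace Ω] (μ : Measure Ω) [IsProbabilityMeasure μ]
    (n m : ℕ) (hn : 1 ≤ n) (hm : 1 ≤ m) (N : ℕ) (hN : N = 2 ^ n)
    (Q : Fin m × Fin N → Ω → ℝ)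
    (hmeas : ∀ p, Measurable (Q p))
    (hindep : iIndepFun Q μ)
    (hlaw : ∀ p, Measure.map (Q p) μ = expMeasure 1)
    (P : Fin m → Fin N → Ω → ℝ)
    (hP : ∀ i z ω, P i z ω = Q (i, z) ω / ∑ w : Fin N, Q (i, w) ω) :
    (∫ ω, (1 / (m : ℝ)) * ∑ i : Fin m, ⨆ z : Fin N, P i z ω ∂μ)
      ≤ (2 / N) * (n * Real.log 2 + 3)
    ∧ (∫ ω, (1 / (m : ℝ)) * ⨆ zvec : Fin m → Fin N, ∑ i : Fin m, P i (zvec i) ω ∂μ)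
      ≤ (2 / N) * (n * Real.log 2 + 3) :=
  stmt1_general μ n m N hN Q hmeas hindep hlaw P hP
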